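/- The sequence (S_b(n))_{n≥0} is b-regular: the ℤ-module generated by its b-kernel is finitely generated, with generating set the b sequences (S_b(n))_{n≥0} and (S_b(bn+s))_{n≥0} for s ∈ {0,...,b-2}. -/

import Mathlib

/-- Number of distinct words in `L_b` (no leading zero, or empty) occurring as
scattered subwords (subsequences) of `u`. -/
def lbCount (u : List ℕ) : ℕ :=
  ((u.sublists.filter (fun v => v.head? ≠ some 0)).dedup).length

/-- `S_b(n)`: number of distinct words of `L_b` occurring as scattered subwords of
the base-`b` expansion of `n` (most significant digit first, `rep_b(0) = ε`). -/
def Sb (b n : ℕ) : ℕ := lbCount ((Nat.digits b n).reverse)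

/-- Summatory function `A_b(n) = ∑_{j<n} S_b(j)`. -/
def Asum (b n : ℕ) : ℕ := ∑ j ∈ Finset.range n, Sb b j

/-!
For a word `u` and a digit `d`, let `E_d(u)` count the words of `L_b` occurring in `u` whose last
letter is `d`, the empty word being counted as ending in `0` (this keeps constant terms out of the
recursion). Then `S(u) = ∑_{d<b} E_d(u)`, and appending a digit `e` gives `E_e(ue) = S(u)`
(drop the last letter) and `E_d(ue) = E_d(u)` for `d ≠ e`. So the `ℤ`-span of the sequences
`n ↦ E_d(rep_b n)` contains `S_b` and is stable under `n ↦ bn + e`; hence it contains the whole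
`b`-kernel of `S_b`. Summing over `d` gives `S_b(bn+e) = 2 S_b(n) - E_e(n)`, which expresses each
`E_e` through `S_b` and `S_b(b·+e)`, and `∑_{e<b} S_b(bn+e) = (2b-1) S_b(n)` eliminates
`e = b-1`.
-/

def lbSubwords (u : List ℕ) : Finset (List ℕ) :=
  (u.sublists.filter (fun v => v.head? ≠ some 0)).toFinset

theorem lbCount_eq_card (u : List ℕ) : lbCount u = (lbSubwords u).card :=
  (List.card_toFinset _).symm

theorem mem_lbSubwords {u v : List ℕ} :
    v ∈ lbSubwords u ↔ v.Sublist u ∧ v.head? ≠ some 0 := by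
  simp [lbSubwords]

def lbCountLast (d : ℕ) (u : List ℕ) : ℕ :=
  ((lbSubwords u).filter (fun v => v.getLastD 0 = d)).card

theorem lbCount_eq_sum_lbCountLast {b : ℕ} (hb : 0 < b) {u : List ℕ} (hu : ∀ x ∈ u, x < b) :
    lbCount u = ∑ d ∈ Finset.range b, lbCountLast d u := by
  rw [lbCount_eq_card]
  refine Finset.card_eq_sum_card_fiberwise fun v hv => Finset.mem_range.2 ?_
  rcases v.eq_nil_or_concat with rfl | ⟨w, x, rfl⟩
  · exact hb
  · rw [List.concat_eq_append, List.getLastD_concat]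
    exact hu x ((mem_lbSubwords.1 hv).1.subset (by simp))

theorem mem_lbSubwords_append_singleton {u v : List ℕ} {e : ℕ} (hv : v.getLast? ≠ some e) :
    v ∈ lbSubwords (u ++ [e]) ↔ v ∈ lbSubwords u := by
  simp only [mem_lbSubwords, and_congr_left_iff]
  refine fun _ => ⟨fun hsub => ?_, fun hsub => hsub.trans (List.sublist_append_left _ _)⟩
  obtain ⟨v₁, v₂, rfl, h₁, h₂⟩ := List.sublist_append_iff.1 hsub
  rcases List.sublist_singleton.1 h₂ with rfl | rfl
  · simpa using h₁
  · exact absurd List.getLast?_concat hv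

theorem lbCountLast_append_singleton_of_ne {d e : ℕ} (u : List ℕ) (hde : d ≠ e) :
    lbCountLast d (u ++ [e]) = lbCountLast d u := by
  unfold lbCountLast
  congr 1
  ext v
  simp only [Finset.mem_filter, and_congr_left_iff]
  intro hv
  refine mem_lbSubwords_append_singleton fun hlast => hde ?_
  rw [← hv, List.getLastD_eq_getLast?, hlast, Option.getD_some]

theorem lbCountLast_append_singleton_self (u : List ℕ) (e : ℕ) :
    lbCountLast e (u ++ [e]) = lbCount u := by
  rw [lbCount_eq_card, lbCountLast]
  -- dropping the last letter is a bijection; its inverse appends `e`, except that `ε`,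
  -- which ends in `0` by convention, is its own preimage when `e = 0`
  refine Finset.card_nbij' List.dropLast (fun w => if w = [] ∧ e = 0 then [] else w ++ [e])
    ?_ ?_ ?_ ?_
  · intro v hv
    simp only [Finset.mem_coe, Finset.mem_filter, mem_lbSubwords] at hv ⊢
    obtain ⟨⟨hsub, hhead⟩, hlast⟩ := hv
    rcases v.eq_nil_or_concat with rfl | ⟨w, x, rfl⟩
    · simp
    · simp only [List.concat_eq_append, List.getLastD_concat] at hsub hlast hhead ⊢
      subst hlast
      rw [List.dropLast_concat]
      refine ⟨(List.append_sublist_append_right _).1 hsub, ?_⟩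
      rcases w with _ | ⟨a, w⟩
      · simp
      · simpa using hhead
  · intro w hw
    simp only [Finset.mem_coe, Finset.mem_filter, mem_lbSubwords] at hw ⊢
    split_ifs with h
    · simp [h.2]
    · refine ⟨⟨(List.append_sublist_append_right _).2 hw.1, ?_⟩, List.getLastD_concat⟩
      rcases w with _ | ⟨a, w⟩
      · simpa using h
      · simpa using hw.2
  · intro v hv
    simp only [Finset.mem_coe, Finset.mem_filter, mem_lbSubwords] at hv
    obtain ⟨⟨-, hhead⟩, hlast⟩ := hv
    rcases v.eq_nil_or_concat with rfl | ⟨w, x, rfl⟩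
    · simp [← hlast]
    · simp only [List.concat_eq_append, List.getLastD_concat] at hlast hhead ⊢
      subst hlast
      rw [List.dropLast_concat, if_neg]
      rintro ⟨rfl, rfl⟩
      simp at hhead
  · intro w _
    dsimp only
    split_ifs with h
    · simp [h.1]
    · exact List.dropLast_concat

def SbLast (b d n : ℕ) : ℕ := lbCountLast d (Nat.digits b n).reverse

theorem reverse_digits_mul_add {b : ℕ} (hb : 1 < b) {m e : ℕ} (he : e < b)
    (h : e ≠ 0 ∨ m ≠ 0) :
    (Nat.digits b (b * m + e)).reverse = (Nat.digits b m).reverse ++ [e] := by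
  rw [add_comm, Nat.digits_add b hb e m he h, List.reverse_cons]

theorem Sb_eq_sum_SbLast {b : ℕ} (hb : 1 < b) (n : ℕ) :
    Sb b n = ∑ d ∈ Finset.range b, SbLast b d n :=
  lbCount_eq_sum_lbCountLast (by omega) fun _ hx =>
    Nat.digits_lt_base hb (List.mem_reverse.1 hx)

theorem SbLast_mul_add_of_ne {b : ℕ} (hb : 1 < b) {d e : ℕ} (he : e < b) (hde : d ≠ e)
    (m : ℕ) :
    SbLast b d (b * m + e) = SbLast b d m := by
  by_cases h : e ≠ 0 ∨ m ≠ 0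
  · rw [SbLast, reverse_digits_mul_add hb he h, lbCountLast_append_singleton_of_ne _ hde, SbLast]
  · obtain ⟨rfl, rfl⟩ : e = 0 ∧ m = 0 := by tauto
    simp

theorem SbLast_mul_add_self {b : ℕ} (hb : 1 < b) {e : ℕ} (he : e < b) (m : ℕ) :
    SbLast b e (b * m + e) = Sb b m := by
  by_cases h : e ≠ 0 ∨ m ≠ 0
  · rw [SbLast, reverse_digits_mul_add hb he h, lbCountLast_append_singleton_self, Sb]
  · obtain ⟨rfl, rfl⟩ : e = 0 ∧ m = 0 := by tauto
    simp only [mul_zero, add_zero, SbLast, Sb, Nat.digits_zero, List.reverse_nil]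
    decide

theorem Sb_mul_add_add_SbLast {b : ℕ} (hb : 1 < b) {e : ℕ} (he : e < b) (m : ℕ) :
    Sb b (b * m + e) + SbLast b e m = 2 * Sb b m := by
  have he' : e ∈ Finset.range b := Finset.mem_range.2 he
  have hrest : ∑ d ∈ (Finset.range b).erase e, SbLast b d (b * m + e) =
      ∑ d ∈ (Finset.range b).erase e, SbLast b d m :=
    Finset.sum_congr rfl fun d hd => SbLast_mul_add_of_ne hb he (Finset.ne_of_mem_erase hd) m
  have hm : ∑ d ∈ (Finset.range b).erase e, SbLast b d m + SbLast b e m = Sb b m := by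
    rw [Finset.sum_erase_add _ _ he', Sb_eq_sum_SbLast hb]
  rw [Sb_eq_sum_SbLast hb (b * m + e), ← Finset.sum_erase_add _ _ he', hrest,
    SbLast_mul_add_self hb he]
  omega

theorem sum_Sb_mul_add {b : ℕ} (hb : 1 < b) (n : ℕ) :
    ∑ s ∈ Finset.range b, Sb b (b * n + s) + Sb b n = 2 * b * Sb b n := by
  have h := Finset.sum_congr rfl fun s hs =>
    Sb_mul_add_add_SbLast hb (Finset.mem_range.1 hs) n
  rw [Finset.sum_add_distrib, ← Sb_eq_sum_SbLast hb, Finset.sum_const, Finset.card_range,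
    smul_eq_mul] at h
  linarith

theorem Sb_mul_add_pred {b : ℕ} (hb : 1 < b) (n : ℕ) :
    (Sb b (b * n + (b - 1)) : ℤ) =
      (2 * b - 1) * Sb b n - ∑ s ∈ Finset.range (b - 1), (Sb b (b * n + s) : ℤ) := by
  have h : ∑ s ∈ Finset.range (b - 1 + 1), Sb b (b * n + s) + Sb b n = 2 * b * Sb b n := by
    rw [Nat.sub_add_cancel hb.le]
    exact sum_Sb_mul_add hb n
  rw [Finset.sum_range_succ] at h
  zify at h
  linarith

theorem comp_pow_mul_add_mem {α : Type*} {b : ℕ} {P : Set (ℕ → α)}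
    (hP : ∀ f ∈ P, ∀ e < b, (fun n => f (b * n + e)) ∈ P) {f : ℕ → α} (hf : f ∈ P) :
    ∀ i j, j < b ^ i → (fun n => f (b ^ i * n + j)) ∈ P := by
  intro i
  induction i generalizing f with
  | zero =>
    intro j hj
    obtain rfl : j = 0 := by simpa using hj
    simpa using hf
  | succ i ih =>
    intro j hj
    have hb : 0 < b := Nat.pos_of_ne_zero fun hb => by simp [hb] at hj
    convert ih (hP f hf (j % b) (Nat.mod_lt j hb)) (j / b)
      (Nat.div_lt_of_lt_mul (by rwa [← pow_succ'])) using 2 with n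
    rw [pow_succ', mul_assoc, mul_add, add_assoc, Nat.div_add_mod]

def lastSpan (b : ℕ) : Submodule ℤ (ℕ → ℤ) :=
  Submodule.span ℤ ((fun d n => (SbLast b d n : ℤ)) '' ↑(Finset.range b))

theorem SbLast_mem_lastSpan {b d : ℕ} (hd : d < b) :
    (fun n => (SbLast b d n : ℤ)) ∈ lastSpan b :=
  Submodule.subset_span ⟨d, Finset.mem_range.2 hd, rfl⟩

theorem Sb_mem_lastSpan {b : ℕ} (hb : 1 < b) : (fun n => (Sb b n : ℤ)) ∈ lastSpan b := by
  have hsum : (fun n => (Sb b n : ℤ)) =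
      ∑ d ∈ Finset.range b, fun n => (SbLast b d n : ℤ) := by
    funext n
    simp [Sb_eq_sum_SbLast hb]
  rw [hsum]
  exact Submodule.sum_mem _ fun d hd => SbLast_mem_lastSpan (Finset.mem_range.1 hd)

theorem comp_mul_add_mem_lastSpan {b : ℕ} (hb : 1 < b) {e : ℕ} (he : e < b) {f : ℕ → ℤ}
    (hf : f ∈ lastSpan b) : (fun n => f (b * n + e)) ∈ lastSpan b := by
  suffices lastSpan b ≤ (lastSpan b).comap (LinearMap.funLeft ℤ ℤ fun n => b * n + e) from
    this hf
  refine Submodule.span_le.2 (Set.image_subset_iff.2 fun d hd => ?_)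
  change (fun n => (SbLast b d (b * n + e) : ℤ)) ∈ lastSpan b
  by_cases hde : d = e
  · subst hde
    simpa only [SbLast_mul_add_self hb he] using Sb_mem_lastSpan hb
  · simpa only [SbLast_mul_add_of_ne hb he hde] using SbLast_mem_lastSpan (Finset.mem_range.1 hd)

theorem lastSpan_le_span_Sb {b : ℕ} (hb : 1 < b) :
    lastSpan b ≤ Submodule.span ℤ (insert (fun n => (Sb b n : ℤ))
      ((fun s n => (Sb b (b * n + s) : ℤ)) '' ↑(Finset.range (b - 1)))) := by
  set N := Submodule.span ℤ (insert (fun n => (Sb b n : ℤ))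
      ((fun s n => (Sb b (b * n + s) : ℤ)) '' ↑(Finset.range (b - 1))))
  have hS : (fun n => (Sb b n : ℤ)) ∈ N := Submodule.subset_span (Set.mem_insert _ _)
  have hlow : ∀ s < b - 1, (fun n => (Sb b (b * n + s) : ℤ)) ∈ N := fun s hs =>
    Submodule.subset_span (Set.mem_insert_of_mem _ ⟨s, Finset.mem_range.2 hs, rfl⟩)
  have htop : (fun n => (Sb b (b * n + (b - 1)) : ℤ)) ∈ N := by
    have hsum : (fun n => (Sb b (b * n + (b - 1)) : ℤ)) =
        (2 * b - 1 : ℤ) • (fun n => (Sb b n : ℤ)) -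
          ∑ s ∈ Finset.range (b - 1), fun n => (Sb b (b * n + s) : ℤ) := by
      funext n
      simp only [Sb_mul_add_pred hb, Pi.sub_apply, Pi.smul_apply, Finset.sum_apply, smul_eq_mul]
    rw [hsum]
    exact N.sub_mem (N.smul_mem _ hS) (N.sum_mem fun s hs => hlow s (Finset.mem_range.1 hs))
  refine Submodule.span_le.2 (Set.image_subset_iff.2 fun d hd => ?_)
  have hd : d < b := Finset.mem_range.1 hd
  have hlast : (fun n => (SbLast b d n : ℤ)) =
      (2 : ℤ) • (fun n => (Sb b n : ℤ)) - fun n => (Sb b (b * n + d) : ℤ) := by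
    funext n
    simp only [Pi.sub_apply, Pi.smul_apply, smul_eq_mul]
    have h := Sb_mul_add_add_SbLast hb hd n
    omega
  simp only [Set.mem_preimage, SetLike.mem_coe, hlast]
  refine N.sub_mem (N.smul_mem _ hS) ?_
  rcases Nat.lt_or_ge d (b - 1) with hd' | hd'
  · exact hlow d hd'
  · obtain rfl : d = b - 1 := by omega
    exact htop

theorem stmt11 (b : ℕ) (hb : 2 ≤ b) :
    ∀ i j : ℕ, j < b ^ i →
      ∃ (c : ℤ) (d : ℕ → ℤ), ∀ n : ℕ,
        (Sb b (b ^ i * n + j) : ℤ) =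
          c * Sb b n + ∑ s ∈ Finset.range (b - 1), d s * Sb b (b * n + s) := by
  intro i j hj
  have hkernel := comp_pow_mul_add_mem (fun f hf e he => comp_mul_add_mem_lastSpan hb he hf)
    (Sb_mem_lastSpan hb) i j hj
  obtain ⟨c, g, hg, hfun⟩ := Submodule.mem_span_insert.1 (lastSpan_le_span_Sb hb hkernel)
  obtain ⟨d, rfl⟩ := (Submodule.mem_span_image_finset_iff_exists_fun' ℤ).1 hg
  refine ⟨c, d, fun n => ?_⟩
  simpa using congrFun hfun n
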